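/- Let A be a real N×N doubly stochastic symmetric matrix with ‖A u‖_2 ≤ λ ‖u‖_2 for all u orthogonal to the all-ones vector. Let V_t ⊆ [N] with |V_t| = p_t N, and suppose u is a nonnegative vector with ‖u‖_2 ≤ (2/√(p' N)) ‖u‖_1 for some p' > 0, λ ≤ p_t p' / 8, and ‖I_{V_t} A u‖_1 ≥ (3 p_t/4) ‖u‖_1. Then ‖I_{V_t} A u‖_2 ≤ (2/√(p_t N)) ‖I_{V_t} A u‖_1. -/

import Mathlib

/-!
Split `u = c • 1 + w` with `c` the mean of `u`, so that `∑ w = 0`. Since `A` fixes constant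
vectors, `A u = c • 1 + A w`. On `V_t` the constant part has ℓ₂-norm
`|c| √(p_t N) ≤ p_t ‖u‖₁ / √(p_t N) ≤ (4/3) ‖I_{V_t} A u‖₁ / √(p_t N)`, while
`‖A w‖₂ ≤ λ ‖w‖₂ ≤ λ ‖u‖₂`. Together with `‖u‖₁ ≤ √N ‖u‖₂`, the hypothesis on `u` forces
`p' ≤ 4` unless `u = 0`, which gives `λ ‖u‖₂ ≤ (2/3) ‖I_{V_t} A u‖₁ / √(p_t N)`; Minkowski's
inequality adds the two bounds.
-/

open Finset Matrix

section
variable {ι : Type*}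

theorem sqrt_sum_sq_add_le (s : Finset ι) (f g : ι → ℝ) :
    √(∑ i ∈ s, (f i + g i) ^ 2) ≤ √(∑ i ∈ s, f i ^ 2) + √(∑ i ∈ s, g i ^ 2) := by
  have key (h : ι → ℝ) : √(∑ i ∈ s, h i ^ 2) = ‖WithLp.toLp 2 (fun i : s ↦ h i)‖ := by
    simp [EuclideanSpace.norm_eq, sum_attach s (fun i ↦ h i ^ 2)]
  rw [key, key, key]
  exact norm_add_le (WithLp.toLp 2 (fun i : s ↦ f i)) (WithLp.toLp 2 (fun i : s ↦ g i))

variable [Fintype ι]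

theorem sum_abs_le_sqrt_card_mul_sqrt_sum_sq (u : ι → ℝ) :
    ∑ i, |u i| ≤ √(Fintype.card ι) * √(∑ i, u i ^ 2) := by
  simpa using Real.sum_mul_le_sqrt_mul_sqrt univ (fun _ ↦ (1 : ℝ)) (fun i ↦ |u i|)

theorem sum_sub_mean_eq_zero (u : ι → ℝ) :
    ∑ i, (u i - (∑ j, u j) / Fintype.card ι) = 0 := by
  rcases isEmpty_or_nonempty ι with hι | hι
  · simp
  rw [sum_sub_distrib, sum_const, card_univ, nsmul_eq_mul]
  field_simp
  ring

theorem sum_sq_sub_mean_le (u : ι → ℝ) :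
    ∑ i, (u i - (∑ j, u j) / Fintype.card ι) ^ 2 ≤ ∑ i, u i ^ 2 := by
  rcases isEmpty_or_nonempty ι with hι | hι
  · simp
  have hn : (0 : ℝ) < Fintype.card ι := by exact_mod_cast Fintype.card_pos
  have : ∑ i, (u i - (∑ j, u j) / Fintype.card ι) ^ 2
      = ∑ i, u i ^ 2 - (∑ j, u j) ^ 2 / Fintype.card ι := by
    simp only [sub_sq, sum_add_distrib, sum_sub_distrib, sum_const, card_univ, nsmul_eq_mul,
      ← sum_mul, ← mul_sum]
    field_simp
    ring
  rw [this]
  linarith [div_nonneg (sq_nonneg (∑ j, u j)) hn.le]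

theorem sqrt_sum_sq_mean_mul_sqrt_card_le (s : Finset ι) (u : ι → ℝ) :
    √(∑ _i ∈ s, ((∑ j, u j) / Fintype.card ι) ^ 2) * √(#s : ℝ)
      ≤ #s / Fintype.card ι * ∑ i, |u i| := by
  rw [sum_const, nsmul_eq_mul, Real.sqrt_mul (by positivity), Real.sqrt_sq_eq_abs,
    mul_right_comm, Real.mul_self_sqrt (by positivity), mul_comm, abs_div, Nat.abs_cast,
    div_mul_comm]
  gcongr
  exact abs_sum_le_sum_abs _ _

theorem mul_sqrt_card_mul_sqrt_sum_sq_le {p : ℝ} (hp : 0 < p) (u : ι → ℝ)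
    (hu : √(∑ i, u i ^ 2) ≤ 2 / √(p * Fintype.card ι) * ∑ i, |u i|) :
    p * √(Fintype.card ι) * √(∑ i, u i ^ 2) ≤ 4 * ∑ i, |u i| := by
  set x := √(∑ i, u i ^ 2)
  set S := ∑ i, |u i|
  have hS : 0 ≤ S := sum_nonneg fun i _ ↦ abs_nonneg (u i)
  have hx0 : 0 ≤ x := Real.sqrt_nonneg _
  rcases hx0.eq_or_lt with hx | hx
  · rw [← hx, mul_zero]; positivity
  have : Nonempty ι := by
    by_contra h
    have := not_nonempty_iff.mp h
    simp [x] at hx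
  have hn : 0 < √(Fintype.card ι : ℝ) := Real.sqrt_pos.mpr (by exact_mod_cast Fintype.card_pos)
  have ha : 0 < √p := Real.sqrt_pos.mpr hp
  have hCS : S ≤ √(Fintype.card ι) * x := sum_abs_le_sqrt_card_mul_sqrt_sum_sq u
  rw [Real.sqrt_mul hp.le, div_mul_eq_mul_div, le_div_iff₀ (by positivity)] at hu
  -- `hu` and `hCS` give `√p * (√n * x) ≤ 2 * √n * x`, and `√n * x > 0`
  have h2 : √p ≤ 2 := by nlinarith [mul_pos hn hx]
  nlinarith [Real.sq_sqrt hp.le]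

theorem mulVec_sub_const {R : Type*} [CommRing R] {A : Matrix ι ι R} (hA : A *ᵥ 1 = 1)
    (u : ι → R) (c : R) : A *ᵥ (fun i ↦ u i - c) = fun i ↦ (A *ᵥ u) i - c := by
  have : (fun i ↦ u i - c) = u - c • 1 := by ext; simp
  rw [this, mulVec_sub, mulVec_smul, hA]
  ext; simp

theorem sqrt_sum_sq_mulVec_sub_mean_le {A : Matrix ι ι ℝ} {lam m : ℝ}
    (hspec : ∀ v : ι → ℝ, ∑ i, v i = 0 → √(∑ i, (A *ᵥ v) i ^ 2) ≤ lam * √(∑ i, v i ^ 2))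
    (hlam : lam ≤ m) (hm : 0 ≤ m) (s : Finset ι) (u : ι → ℝ) :
    √(∑ i ∈ s, (A *ᵥ fun j ↦ u j - (∑ k, u k) / Fintype.card ι) i ^ 2)
      ≤ m * √(∑ i, u i ^ 2) := by
  calc _ ≤ √(∑ i, (A *ᵥ fun j ↦ u j - (∑ k, u k) / Fintype.card ι) i ^ 2) :=
        Real.sqrt_le_sqrt (sum_le_sum_of_subset_of_nonneg (subset_univ s)
          fun _ _ _ ↦ sq_nonneg _)
    _ ≤ lam * √(∑ i, (u i - (∑ k, u k) / Fintype.card ι) ^ 2) :=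
        hspec _ (sum_sub_mean_eq_zero u)
    _ ≤ m * √(∑ i, (u i - (∑ k, u k) / Fintype.card ι) ^ 2) := by gcongr
    _ ≤ m * √(∑ i, u i ^ 2) :=
        mul_le_mul_of_nonneg_left (Real.sqrt_le_sqrt (sum_sq_sub_mean_le u)) hm

theorem pos_and_le_one_of_card_eq {s : Finset ι} {pt : ℝ} (hs_ne : s.Nonempty)
    (hs : (#s : ℝ) = pt * Fintype.card ι) : 0 < pt ∧ pt ≤ 1 ∧ (0 : ℝ) < Fintype.card ι := by
  have hcard : (1 : ℝ) ≤ #s := by exact_mod_cast hs_ne.card_pos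
  have hcard_le : (#s : ℝ) ≤ Fintype.card ι := by exact_mod_cast card_le_univ s
  have hpt : 0 < pt := by nlinarith
  exact ⟨hpt, by nlinarith, by linarith⟩

theorem sqrt_sum_sq_mean_le_of_card_eq {s : Finset ι} {pt L : ℝ} (hs_ne : s.Nonempty)
    (hs : (#s : ℝ) = pt * Fintype.card ι) (u : ι → ℝ) (hL : 3 * pt / 4 * ∑ i, |u i| ≤ L) :
    √(∑ _i ∈ s, ((∑ j, u j) / Fintype.card ι) ^ 2) ≤ 4 / 3 * L / √(pt * Fintype.card ι) := by
  obtain ⟨hpt, -, hn⟩ := pos_and_le_one_of_card_eq hs_ne hs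
  have := sqrt_sum_sq_mean_mul_sqrt_card_le s u
  rw [hs, mul_div_cancel_right₀ _ hn.ne'] at this
  rw [le_div_iff₀ (Real.sqrt_pos.mpr (mul_pos hpt hn))]
  linarith

theorem sqrt_sum_sq_mulVec_sub_mean_le_of_card_eq {A : Matrix ι ι ℝ} {lam p' : ℝ}
    (hspec : ∀ v : ι → ℝ, ∑ i, v i = 0 → √(∑ i, (A *ᵥ v) i ^ 2) ≤ lam * √(∑ i, v i ^ 2))
    {s : Finset ι} {pt L : ℝ} (hs_ne : s.Nonempty) (hs : (#s : ℝ) = pt * Fintype.card ι)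
    (hp' : 0 < p') (hl : lam ≤ pt * p' / 8) (u : ι → ℝ)
    (hu : √(∑ i, u i ^ 2) ≤ 2 / √(p' * Fintype.card ι) * ∑ i, |u i|)
    (hL : 3 * pt / 4 * ∑ i, |u i| ≤ L) :
    √(∑ i ∈ s, (A *ᵥ fun j ↦ u j - (∑ k, u k) / Fintype.card ι) i ^ 2)
      ≤ 2 / 3 * L / √(pt * Fintype.card ι) := by
  obtain ⟨hpt, hpt1, hn⟩ := pos_and_le_one_of_card_eq hs_ne hs
  have hu' := mul_sqrt_card_mul_sqrt_sum_sq_le hp' u hu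
  have hsqrt_pt : √pt ≤ 1 := Real.sqrt_le_one.mpr hpt1
  refine (sqrt_sum_sq_mulVec_sub_mean_le hspec hl (by positivity) s u).trans ?_
  rw [le_div_iff₀ (Real.sqrt_pos.mpr (mul_pos hpt hn)), Real.sqrt_mul hpt.le]
  calc pt * p' / 8 * √(∑ i, u i ^ 2) * (√pt * √(Fintype.card ι))
      = pt * √pt / 8 * (p' * √(Fintype.card ι) * √(∑ i, u i ^ 2)) := by ring
    _ ≤ pt * √pt / 8 * (4 * ∑ i, |u i|) := by gcongr
    _ ≤ pt / 8 * (4 * ∑ i, |u i|) := by gcongr; exact mul_le_of_le_one_right hpt.le hsqrt_pt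
    _ ≤ 2 / 3 * L := by linarith

end

theorem stmt_15_general (N : ℕ) (A : Matrix (Fin N) (Fin N) ℝ)
    (hDS : A ∈ doublyStochastic ℝ (Fin N))
    (lam : ℝ)
    (hspec : ∀ u : Fin N → ℝ, ∑ i, u i = 0 →
      Real.sqrt (∑ i, (A.mulVec u i) ^ 2) ≤ lam * Real.sqrt (∑ i, (u i) ^ 2))
    (Vt : Finset (Fin N)) (pt p' : ℝ) (hp' : 0 < p')
    (hVt : (Vt.card : ℝ) = pt * N)
    (u : Fin N → ℝ)
    (hu2 : Real.sqrt (∑ i, (u i) ^ 2) ≤ 2 / Real.sqrt (p' * N) * ∑ i, |u i|)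
    (hl : lam ≤ pt * p' / 8)
    (hlow : ∑ i ∈ Vt, |A.mulVec u i| ≥ 3 * pt / 4 * ∑ i, |u i|) :
    Real.sqrt (∑ i ∈ Vt, (A.mulVec u i) ^ 2)
      ≤ 2 / Real.sqrt (pt * N) * ∑ i ∈ Vt, |A.mulVec u i| := by
  rcases Vt.eq_empty_or_nonempty with rfl | hVt_ne
  · simp
  set L := ∑ i ∈ Vt, |A.mulVec u i|
  have hVt' : (#Vt : ℝ) = pt * Fintype.card (Fin N) := by rwa [Fintype.card_fin]
  have hu2' : √(∑ i, u i ^ 2) ≤ 2 / √(p' * Fintype.card (Fin N)) * ∑ i, |u i| := by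
    rwa [Fintype.card_fin]
  set c := (∑ j, u j) / N
  set w := fun i ↦ u i - c
  have hAu : ∀ i, (A *ᵥ u) i = c + (A *ᵥ w) i := by
    intro i
    have := congrFun (mulVec_sub_const ((mem_doublyStochastic.mp hDS).2.1) u c) i
    simp only [w, this]
    ring
  calc √(∑ i ∈ Vt, (A *ᵥ u) i ^ 2)
      ≤ √(∑ i ∈ Vt, c ^ 2) + √(∑ i ∈ Vt, (A *ᵥ w) i ^ 2) := by
        simpa only [hAu] using sqrt_sum_sq_add_le Vt (fun _ ↦ c) (A *ᵥ w)
    _ ≤ 4 / 3 * L / √(pt * N) + 2 / 3 * L / √(pt * N) := by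
        simpa only [Fintype.card_fin] using
          add_le_add (sqrt_sum_sq_mean_le_of_card_eq hVt_ne hVt' u hlow)
            (sqrt_sum_sq_mulVec_sub_mean_le_of_card_eq hspec hVt_ne hVt' hp' hl u hu2' hlow)
    _ = 2 / √(pt * N) * L := by ring

theorem stmt_15 (N : ℕ) (hN : 0 < N) (A : Matrix (Fin N) (Fin N) ℝ)
    (hDS : A ∈ doublyStochastic ℝ (Fin N)) (hsymm : A.IsSymm)
    (lam : ℝ)
    (hspec : ∀ u : Fin N → ℝ, ∑ i, u i = 0 →
      Real.sqrt (∑ i, (A.mulVec u i) ^ 2) ≤ lam * Real.sqrt (∑ i, (u i) ^ 2))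
    (Vt : Finset (Fin N)) (pt p' : ℝ) (hp' : 0 < p')
    (hVt : (Vt.card : ℝ) = pt * N)
    (u : Fin N → ℝ) (hu : ∀ i, 0 ≤ u i)
    (hu2 : Real.sqrt (∑ i, (u i) ^ 2) ≤ 2 / Real.sqrt (p' * N) * ∑ i, |u i|)
    (hl : lam ≤ pt * p' / 8)
    (hlow : ∑ i ∈ Vt, |A.mulVec u i| ≥ 3 * pt / 4 * ∑ i, |u i|) :
    Real.sqrt (∑ i ∈ Vt, (A.mulVec u i) ^ 2)
      ≤ 2 / Real.sqrt (pt * N) * ∑ i ∈ Vt, |A.mulVec u i| :=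
  stmt_15_general N A hDS lam hspec Vt pt p' hp' hVt u hu2 hl hlow
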